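/- Let U_1, U_2, U_3 be i.i.d. uniform on [0,1], W_1 = 2 - 3|U_2 - U_1| - 6 U_1(1 - U_1), W_2 = 2 - 3|U_3 - U_2| - 6 U_2(1 - U_2). Then E[W_1 W_2 (W_1^2 + W_2^2)] = -3/28. -/

import Mathlib

/-!
`W₁ = W (U 0) (U 1)` and `W₂ = W (U 1) (U 2)` share only `U 1`, and conditionally on `U 1 = y`
they are independent. Writing the integrand as `W₁³ W₂ + W₁ W₂³`, Fubini over the law of
`(U 1, U 0, U 2)`, a product of three uniform laws, turns the expectation into
`∫₀¹ (E[W₁³ | y] E[W₂ | y] + E[W₁ | y] E[W₂³ | y]) dy`. Splitting `[0,1]` at `y` removes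
the absolute value, so each conditional moment is an explicit polynomial in `y`, and the
last integral is a polynomial integral.
-/
open MeasureTheory ProbabilityTheory Set intervalIntegral

theorem iIndepFun.map_fin_three_eq_prod {Ω α : Type*} [MeasurableSpace Ω] [MeasurableSpace α]
    {P : Measure Ω} [IsFiniteMeasure P] {U : Fin 3 → Ω → α}
    (hmeas : ∀ i, Measurable (U i)) (hindep : iIndepFun U P) :
    P.map (fun ω => (U 1 ω, U 0 ω, U 2 ω))
      = (P.map (U 1)).prod ((P.map (U 0)).prod (P.map (U 2))) := by
  have h02 : P.map (fun ω => (U 0 ω, U 2 ω)) = (P.map (U 0)).prod (P.map (U 2)) :=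
    (hindep.indepFun (by decide)).map_prod_eq_prod_map_map
      (hmeas 0).aemeasurable (hmeas 2).aemeasurable
  rw [← h02]
  exact (hindep.indepFun_prodMk hmeas 0 2 1 (by decide) (by decide)).symm.map_prod_eq_prod_map_map
    (hmeas 1).aemeasurable ((hmeas 0).prodMk (hmeas 2)).aemeasurable

theorem Continuous.integrable_restrict_prod {X Y E : Type*} [MeasureSpace X] [MeasureSpace Y]
    [TopologicalSpace X] [TopologicalSpace Y] [NormedAddCommGroup E]
    [SFinite (volume : Measure X)] [SFinite (volume : Measure Y)]
    [OpensMeasurableSpace (X × Y)] [IsFiniteMeasureOnCompacts (volume : Measure (X × Y))]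
    [T2Space X] [T2Space Y] {s : Set X} {t : Set Y} (hs : IsCompact s) (ht : IsCompact t)
    {f : X × Y → E} (hf : Continuous f) :
    Integrable f ((volume.restrict s).prod (volume.restrict t)) := by
  rw [Measure.prod_restrict, ← Measure.volume_eq_prod]
  exact hf.continuousOn.integrableOn_compact (hs.prod ht)

theorem setIntegral_Icc_eq_intervalIntegral {E : Type*} [NormedAddCommGroup E] [NormedSpace ℝ E]
    {a b : ℝ} (hab : a ≤ b) (f : ℝ → E) : ∫ x in Icc a b, f x = ∫ x in a..b, f x := by
  rw [integral_Icc_eq_integral_Ioc, integral_of_le hab]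

theorem integral_abs_sub_eq_add {a b y : ℝ} (hay : a ≤ y) (hyb : y ≤ b)
    {g : ℝ → ℝ → ℝ} (hg : Continuous (Function.uncurry g)) :
    ∫ x in a..b, g x |y - x| = (∫ x in a..y, g x (y - x)) + ∫ x in y..b, g x (x - y) := by
  have hc : Continuous fun x => g x |y - x| := hg.comp₂ continuous_id (by fun_prop)
  rw [← integral_add_adjacent_intervals (hc.intervalIntegrable a y) (hc.intervalIntegrable y b)]
  congr 1 <;> refine integral_congr fun x hx => ?_
  · rw [uIcc_of_le hay] at hx
    rw [abs_of_nonneg (sub_nonneg.2 hx.2)]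
  · rw [uIcc_of_le hyb] at hx
    rw [abs_sub_comm, abs_of_nonneg (sub_nonneg.2 hx.1)]

noncomputable def W (x y : ℝ) : ℝ := 2 - 3 * |y - x| - 6 * x * (1 - x)

theorem integral_prod_W_mul_W (y : ℝ) :
    ∫ q, (W q.1 y ^ 3 * W y q.2 + W q.1 y * W y q.2 ^ 3)
        ∂(volume.restrict (Icc (0:ℝ) 1)).prod (volume.restrict (Icc (0:ℝ) 1))
      = (∫ x in (0:ℝ)..1, W x y ^ 3) * (∫ z in (0:ℝ)..1, W y z)
        + (∫ x in (0:ℝ)..1, W x y) * ∫ z in (0:ℝ)..1, W y z ^ 3 := by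
  have hint (m n : ℕ) : Integrable (fun q : ℝ × ℝ => W q.1 y ^ m * W y q.2 ^ n)
      ((volume.restrict (Icc (0:ℝ) 1)).prod (volume.restrict (Icc (0:ℝ) 1))) :=
    Continuous.integrable_restrict_prod isCompact_Icc isCompact_Icc (by unfold W; fun_prop)
  rw [integral_add (by simpa using hint 3 1) (by simpa using hint 1 3),
    integral_prod_mul (fun x => W x y ^ 3) (fun z => W y z),
    integral_prod_mul (fun x => W x y) (fun z => W y z ^ 3)]
  simp only [setIntegral_Icc_eq_intervalIntegral zero_le_one]

theorem integral_W_pow_fst (k : ℕ) {y : ℝ} (hy : y ∈ Icc (0:ℝ) 1) :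
    ∫ x in (0:ℝ)..1, W x y ^ k
      = (∫ x in (0:ℝ)..y, (2 - 3 * (y - x) - 6 * x * (1 - x)) ^ k)
        + ∫ x in y..1, (2 - 3 * (x - y) - 6 * x * (1 - x)) ^ k :=
  integral_abs_sub_eq_add (g := fun x t => (2 - 3 * t - 6 * x * (1 - x)) ^ k) hy.1 hy.2
    (by fun_prop)

theorem integral_W_pow_snd (k : ℕ) {y : ℝ} (hy : y ∈ Icc (0:ℝ) 1) :
    ∫ z in (0:ℝ)..1, W y z ^ k
      = (∫ z in (0:ℝ)..y, (2 - 3 * (y - z) - 6 * y * (1 - y)) ^ k)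
        + ∫ z in y..1, (2 - 3 * (z - y) - 6 * y * (1 - y)) ^ k := by
  simp only [W, abs_sub_comm]
  exact integral_abs_sub_eq_add (g := fun _ t => (2 - 3 * t - 6 * y * (1 - y)) ^ k) hy.1 hy.2
    (by fun_prop)

theorem integral_W_fst {y : ℝ} (hy : y ∈ Icc (0:ℝ) 1) :
    ∫ x in (0:ℝ)..1, W x y = -1/2 + 3*y - 3*y^2 := by
  have h := integral_W_pow_fst 1 hy
  simp only [pow_one] at h
  rw [h]
  ring_nf
  simp (disch := (apply Continuous.intervalIntegrable; fun_prop)) only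
    [intervalIntegral.integral_add, intervalIntegral.integral_sub, intervalIntegral.integral_const,
      smul_eq_mul, intervalIntegral.integral_const_mul, intervalIntegral.integral_mul_const,
      integral_id, integral_pow]
  ring

theorem integral_W_fst_cube {y : ℝ} (hy : y ∈ Icc (0:ℝ) 1) :
    ∫ x in (0:ℝ)..1, W x y ^ 3
      = -83/140 + 54/5*y - 99/2*y^2 + 99*y^3 - 207/2*y^4 + 324/5*y^5 - 108/5*y^6 := by
  rw [integral_W_pow_fst 3 hy]
  ring_nf
  -- `simp` does not instantiate `integral_const_mul` at `∫ c * x` unless given `f := id`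
  simp (disch := (apply Continuous.intervalIntegrable; fun_prop)) only
    [intervalIntegral.integral_add, intervalIntegral.integral_sub, intervalIntegral.integral_const,
      smul_eq_mul, intervalIntegral.integral_const_mul, intervalIntegral.integral_mul_const,
      intervalIntegral.integral_const_mul (f := fun x => x), integral_id, integral_pow]
  ring

theorem integral_W_snd {y : ℝ} (hy : y ∈ Icc (0:ℝ) 1) :
    ∫ z in (0:ℝ)..1, W y z = 1/2 - 3*y + 3*y^2 := by
  have h := integral_W_pow_snd 1 hy
  simp only [pow_one] at h
  rw [h]
  ring_nf
  simp (disch := (apply Continuous.intervalIntegrable; fun_prop)) only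
    [intervalIntegral.integral_add, intervalIntegral.integral_sub, intervalIntegral.integral_const,
      smul_eq_mul, intervalIntegral.integral_const_mul, intervalIntegral.integral_mul_const,
      integral_id]
  ring

theorem integral_W_snd_cube {y : ℝ} (hy : y ∈ Icc (0:ℝ) 1) :
    ∫ z in (0:ℝ)..1, W y z ^ 3
      = 5/4 - 9*y - 9/2*y^2 + 135*y^3 - 675/2*y^4 + 324*y^5 - 108*y^6 := by
  rw [integral_W_pow_snd 3 hy]
  ring_nf
  simp (disch := (apply Continuous.intervalIntegrable; fun_prop)) only
    [intervalIntegral.integral_add, intervalIntegral.integral_sub, intervalIntegral.integral_const,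
      smul_eq_mul, intervalIntegral.integral_const_mul, intervalIntegral.integral_mul_const,
      intervalIntegral.integral_const_mul (f := fun x => x), integral_id, integral_pow]
  ring

theorem integral_conditional_mixed_moment :
    ∫ y in (0:ℝ)..1, ((∫ x in (0:ℝ)..1, W x y ^ 3) * (∫ z in (0:ℝ)..1, W y z)
      + (∫ x in (0:ℝ)..1, W x y) * ∫ z in (0:ℝ)..1, W y z ^ 3) = -(3 / 28) := calc
  _ = ∫ y in (0:ℝ)..1,
        ((-83/140 + 54/5*y - 99/2*y^2 + 99*y^3 - 207/2*y^4 + 324/5*y^5 - 108/5*y^6)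
            * (1/2 - 3*y + 3*y^2)
          + (-1/2 + 3*y - 3*y^2)
            * (5/4 - 9*y - 9/2*y^2 + 135*y^3 - 675/2*y^4 + 324*y^5 - 108*y^6)) := by
    refine integral_congr fun y hy => ?_
    rw [uIcc_of_le zero_le_one] at hy
    simp only [integral_W_fst hy, integral_W_fst_cube hy, integral_W_snd hy,
      integral_W_snd_cube hy]
  _ = -(3 / 28) := by
    ring_nf
    simp (disch := (apply Continuous.intervalIntegrable; fun_prop)) only
      [intervalIntegral.integral_add, intervalIntegral.integral_div, intervalIntegral.integral_neg,
        intervalIntegral.integral_const, smul_eq_mul, intervalIntegral.integral_mul_const,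
        integral_id, integral_pow]
    norm_num

/-- If `U 0, U 1, U 2` are i.i.d. uniform on `[0,1]`,
`W₁ = 2 - 3|U 1 - U 0| - 6 U 0 (1 - U 0)` and `W₂ = 2 - 3|U 2 - U 1| - 6 U 1 (1 - U 1)`,
then `E[W₁ W₂ (W₁² + W₂²)] = -3/28`. -/
theorem expectation_W1_W2_mixed
    {Ω : Type*} [MeasurableSpace Ω] (P : Measure Ω) [IsProbabilityMeasure P]
    (U : Fin 3 → Ω → ℝ) (hmeas : ∀ i, Measurable (U i))
    (hindep : iIndepFun U P)
    (hunif : ∀ i, Measure.map (U i) P = volume.restrict (Set.Icc (0:ℝ) 1)) :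
    ∫ ω, (2 - 3 * |U 1 ω - U 0 ω| - 6 * U 0 ω * (1 - U 0 ω))
        * (2 - 3 * |U 2 ω - U 1 ω| - 6 * U 1 ω * (1 - U 1 ω))
        * ((2 - 3 * |U 1 ω - U 0 ω| - 6 * U 0 ω * (1 - U 0 ω)) ^ 2
          + (2 - 3 * |U 2 ω - U 1 ω| - 6 * U 1 ω * (1 - U 1 ω)) ^ 2) ∂P
      = -(3 / 28) := by
  set μ : Measure ℝ := volume.restrict (Icc 0 1)
  have hlaw : P.map (fun ω => (U 1 ω, U 0 ω, U 2 ω)) = μ.prod (μ.prod μ) := by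
    rw [iIndepFun.map_fin_three_eq_prod hmeas hindep, hunif, hunif, hunif]
  set Φ : ℝ × ℝ × ℝ → ℝ := fun p =>
    W p.2.1 p.1 ^ 3 * W p.1 p.2.2 + W p.2.1 p.1 * W p.1 p.2.2 ^ 3
  have hΦ : Continuous Φ := by simp only [Φ, W]; fun_prop
  calc _ = ∫ ω, Φ (U 1 ω, U 0 ω, U 2 ω) ∂P := by
        congr 1; funext ω; simp only [Φ, W]; ring
    _ = ∫ p, Φ p ∂μ.prod (μ.prod μ) := by
        rw [← hlaw, integral_map ((hmeas 1).prodMk ((hmeas 0).prodMk (hmeas 2))).aemeasurable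
          hΦ.aestronglyMeasurable]
    _ = ∫ y, ∫ q, Φ (y, q) ∂μ.prod μ ∂μ := by
        refine integral_prod Φ ?_
        rw [Measure.prod_restrict]
        exact hΦ.integrable_restrict_prod isCompact_Icc (isCompact_Icc.prod isCompact_Icc)
    _ = ∫ y in (0:ℝ)..1, ((∫ x in (0:ℝ)..1, W x y ^ 3) * (∫ z in (0:ℝ)..1, W y z)
          + (∫ x in (0:ℝ)..1, W x y) * ∫ z in (0:ℝ)..1, W y z ^ 3) := by
        simp only [Φ, μ, integral_prod_W_mul_W, setIntegral_Icc_eq_intervalIntegral zero_le_one]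
    _ = -(3 / 28) := integral_conditional_mixed_moment
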